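/- arXiv:cs/0207026 — 7 statements merged into one kernel-verified Lean document; each statement's English description precedes it below -/
import Mathlib

section
/- Let A be a sequence of pairs (a_k, w_k) for k = 1,…,n with w_k > 0. If segments A(k, k') and A(m, m') are both right-skew, and k < m ≤ k' < m', then the combined segment A(k, m') is right-skew. -/
noncomputable def density (a w : ℕ → ℝ) (i j : ℕ) : ℝ :=
  (∑ t ∈ Finset.Icc i j, a t) / (∑ t ∈ Finset.Icc i j, w t)

def RightSkew (a w : ℕ → ℝ) (i k : ℕ) : Prop :=
  ∀ j, i ≤ j → j < k → density a w i j ≤ density a w (j + 1) k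

lemma le_mediant {x A b c d : ℝ} (hb : 0 < b) (hd : 0 < d)
    (h1 : x ≤ A / b) (h2 : x ≤ c / d) : x ≤ (A + c) / (b + d) := by
  rw [le_div_iff₀ hb] at h1
  rw [le_div_iff₀ hd] at h2
  rw [le_div_iff₀ (by linarith)]
  nlinarith

lemma mediant_le {x A b c d : ℝ} (hb : 0 < b) (hd : 0 < d)
    (h1 : A / b ≤ x) (h2 : c / d ≤ x) : (A + c) / (b + d) ≤ x := by
  rw [div_le_iff₀ hb] at h1
  rw [div_le_iff₀ hd] at h2
  rw [div_le_iff₀ (by linarith)]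
  nlinarith

lemma sum_split (f : ℕ → ℝ) {i j l : ℕ} (hij : i ≤ j + 1) (hjl : j ≤ l) :
    (∑ t ∈ Finset.Icc i j, f t) + ∑ t ∈ Finset.Icc (j + 1) l, f t
      = ∑ t ∈ Finset.Icc i l, f t := by
  rw [← Finset.Ico_add_one_right_eq_Icc, ← Finset.Ico_add_one_right_eq_Icc, ← Finset.Ico_add_one_right_eq_Icc]
  exact Finset.sum_Ico_consecutive f hij (Nat.succ_le_succ hjl)

lemma Wpos (w : ℕ → ℝ) (hw : ∀ t, 0 < w t) {i j : ℕ} (h : i ≤ j) :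
    0 < ∑ t ∈ Finset.Icc i j, w t :=
  Finset.sum_pos (fun t _ => hw t) (by simpa using Finset.nonempty_Icc.2 h)

lemma le_density_combine (a w : ℕ → ℝ) (hw : ∀ t, 0 < w t) {x : ℝ} {i j l : ℕ}
    (hij : i ≤ j) (hjl : j < l)
    (h1 : x ≤ density a w i j) (h2 : x ≤ density a w (j + 1) l) :
    x ≤ density a w i l := by
  unfold density at *
  rw [← sum_split a (i := i) (j := j) (l := l) (by omega) (by omega),
    ← sum_split w (i := i) (j := j) (l := l) (by omega) (by omega)]
  exact le_mediant (Wpos w hw hij) (Wpos w hw (by omega)) h1 h2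

lemma density_combine_le (a w : ℕ → ℝ) (hw : ∀ t, 0 < w t) {x : ℝ} {i j l : ℕ}
    (hij : i ≤ j) (hjl : j < l)
    (h1 : density a w i j ≤ x) (h2 : density a w (j + 1) l ≤ x) :
    density a w i l ≤ x := by
  unfold density at *
  rw [← sum_split a (i := i) (j := j) (l := l) (by omega) (by omega),
    ← sum_split w (i := i) (j := j) (l := l) (by omega) (by omega)]
  exact mediant_le (Wpos w hw hij) (Wpos w hw (by omega)) h1 h2

theorem rightSkew_overlap_union (a w : ℕ → ℝ) (hw : ∀ t, 0 < w t)
    (k k' m m' : ℕ)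
    (h1 : RightSkew a w k k') (h2 : RightSkew a w m m')
    (hkm : k < m) (hmk' : m ≤ k') (hk'm' : k' < m') :
    RightSkew a w k m' := by
  obtain ⟨p, rfl⟩ : ∃ p, m = p + 1 := ⟨m - 1, by omega⟩
  intro j hkj hjm'
  -- key auxiliary inequalities
  have hA : density a w k p ≤ density a w (p + 1) k' := h1 p (by omega) (by omega)
  have hB : density a w (p + 1) k' ≤ density a w (k' + 1) m' := h2 k' hmk' hk'm'
  have hC : density a w k k' ≤ density a w (p + 1) k' :=
    density_combine_le a w hw (by omega) (by omega) hA le_rfl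
  have hD : density a w (p + 1) k' ≤ density a w (p + 1) m' :=
    le_density_combine a w hw (by omega) (by omega) le_rfl hB
  rcases lt_trichotomy j k' with hj | rfl | hj
  · have h1' : density a w k j ≤ density a w (j + 1) k' := h1 j hkj hj
    have hkk' : density a w k j ≤ density a w k k' :=
      le_density_combine a w hw hkj hj le_rfl h1'
    have h3 : density a w k j ≤ density a w (k' + 1) m' := by linarith
    exact le_density_combine a w hw (by omega) (by omega) h1' h3
  · linarith
  · have h2' : density a w (p + 1) j ≤ density a w (j + 1) m' := h2 j (by omega) hjm'
    have hmm' : density a w (p + 1) m' ≤ density a w (j + 1) m' :=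
      density_combine_le a w hw (by omega) hjm' h2' le_rfl
    have hE : density a w k p ≤ density a w (j + 1) m' := by linarith
    exact density_combine_le a w hw (by omega) (by omega) hE h2'
end

section
/- Let A be a sequence of pairs (a_k, w_k) with w_k > 0 for k = 1,…,n. Every nonempty segment A(x,y) has a unique decreasingly right-skew partition: a partition into consecutive segments A_1 A_2 ⋯ A_m such that each A_t is right-skew and μ(A_1) > μ(A_2) > ⋯ > μ(A_m). -/
/-- `segs` is a decreasingly right-skew partition of the segment `A(x,y)`. -/
def IsDRSP (a w : ℕ → ℝ) (x y : ℕ) (segs : List (ℕ × ℕ)) : Prop :=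
  segs ≠ [] ∧
  segs.head?.map Prod.fst = some x ∧
  segs.getLast?.map Prod.snd = some y ∧
  (∀ s ∈ segs, s.1 ≤ s.2 ∧ RightSkew a w s.1 s.2) ∧
  segs.Chain' (fun s t => t.1 = s.2 + 1 ∧ density a w t.1 t.2 < density a w s.1 s.2)

/-! The density of a concatenation is the mediant of the densities of its two parts, so it lies
between them. Hence two adjacent right-skew blocks with non-decreasing densities merge into a
right-skew block, and a decreasingly right-skew partition is built from right to left: prepend
each new element as a block and merge it with its right neighbour as long as the densities do
not decrease. For uniqueness, the first block `A(x, p)` of any such partition is pinned down by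
the densities `μ(x, j)`: right skewness gives `μ(x, j) ≤ μ(x, p)` for `j ≤ p`, and the strictly
decreasing densities of the later blocks give `μ(x, j) < μ(x, p)` for `j > p`. -/

section Mediant

variable {K : Type*} [Field K] [LinearOrder K] [IsStrictOrderedRing K] {a b c d : K}

theorem div_le_div_iff_div_le_mediant (hb : 0 < b) (hd : 0 < d) :
    a / b ≤ c / d ↔ a / b ≤ (a + c) / (b + d) := by
  rw [div_le_div_iff₀ hb hd, div_le_div_iff₀ hb (add_pos hb hd)]
  constructor <;> intro h <;> nlinarith

theorem div_le_div_iff_mediant_le_div (hb : 0 < b) (hd : 0 < d) :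
    a / b ≤ c / d ↔ (a + c) / (b + d) ≤ c / d := by
  rw [div_le_div_iff₀ hb hd, div_le_div_iff₀ (add_pos hb hd) hd]
  constructor <;> intro h <;> nlinarith

theorem min_le_mediant (hb : 0 < b) (hd : 0 < d) :
    min (a / b) (c / d) ≤ (a + c) / (b + d) := by
  rcases le_total (a / b) (c / d) with h | h
  · rw [min_eq_left h]
    exact (div_le_div_iff_div_le_mediant hb hd).1 h
  · rw [min_eq_right h, add_comm a, add_comm b]
    exact (div_le_div_iff_div_le_mediant hd hb).1 h

theorem mediant_le_max (hb : 0 < b) (hd : 0 < d) :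
    (a + c) / (b + d) ≤ max (a / b) (c / d) := by
  rcases le_total (a / b) (c / d) with h | h
  · rw [max_eq_right h]
    exact (div_le_div_iff_mediant_le_div hb hd).1 h
  · rw [max_eq_left h, add_comm a, add_comm b]
    exact (div_le_div_iff_mediant_le_div hd hb).1 h

end Mediant

section Density

variable {a w : ℕ → ℝ} {i j k : ℕ}

theorem Finset.sum_Icc_split {M : Type*} [AddCommMonoid M] (f : ℕ → M) (hij : i ≤ j) (hjk : j < k) :
    ∑ t ∈ Icc i k, f t = ∑ t ∈ Icc i j, f t + ∑ t ∈ Icc (j + 1) k, f t := by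
  simp only [← Finset.Ico_add_one_right_eq_Icc]
  exact (Finset.sum_Ico_consecutive f (by omega) (by omega)).symm

theorem density_split (hij : i ≤ j) (hjk : j < k) :
    density a w i k = (∑ t ∈ Finset.Icc i j, a t + ∑ t ∈ Finset.Icc (j + 1) k, a t) /
      (∑ t ∈ Finset.Icc i j, w t + ∑ t ∈ Finset.Icc (j + 1) k, w t) := by
  rw [density, Finset.sum_Icc_split a hij hjk, Finset.sum_Icc_split w hij hjk]

theorem sum_Icc_pos (hw : ∀ t, 0 < w t) (hij : i ≤ j) : 0 < ∑ t ∈ Finset.Icc i j, w t :=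
  Finset.sum_pos (fun t _ ↦ hw t) (Finset.nonempty_Icc.2 hij)

theorem density_le_density_succ_iff_le_left (hw : ∀ t, 0 < w t) (hij : i ≤ j) (hjk : j < k) :
    density a w i j ≤ density a w (j + 1) k ↔ density a w i j ≤ density a w i k := by
  rw [density_split hij hjk]
  exact div_le_div_iff_div_le_mediant (sum_Icc_pos hw hij) (sum_Icc_pos hw hjk)

theorem density_le_density_succ_iff_le_right (hw : ∀ t, 0 < w t) (hij : i ≤ j) (hjk : j < k) :
    density a w i j ≤ density a w (j + 1) k ↔ density a w i k ≤ density a w (j + 1) k := by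
  rw [density_split hij hjk]
  exact div_le_div_iff_mediant_le_div (sum_Icc_pos hw hij) (sum_Icc_pos hw hjk)

theorem min_le_density_of_split (hw : ∀ t, 0 < w t) (hij : i ≤ j) (hjk : j < k) :
    min (density a w i j) (density a w (j + 1) k) ≤ density a w i k := by
  rw [density_split hij hjk]
  exact min_le_mediant (sum_Icc_pos hw hij) (sum_Icc_pos hw hjk)

theorem density_le_max_of_split (hw : ∀ t, 0 < w t) (hij : i ≤ j) (hjk : j < k) :
    density a w i k ≤ max (density a w i j) (density a w (j + 1) k) := by
  rw [density_split hij hjk]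
  exact mediant_le_max (sum_Icc_pos hw hij) (sum_Icc_pos hw hjk)

end Density

section RightSkew

variable {a w : ℕ → ℝ} {i j k : ℕ}

theorem rightSkew_self (a w : ℕ → ℝ) (i : ℕ) : RightSkew a w i i :=
  fun _ hij hji ↦ absurd (hij.trans_lt hji) (lt_irrefl i)

theorem RightSkew.density_le (hw : ∀ t, 0 < w t) (h : RightSkew a w i k) (hij : i ≤ j)
    (hjk : j ≤ k) : density a w i j ≤ density a w i k := by
  rcases hjk.eq_or_lt with rfl | hjk
  · exact le_rfl
  · exact (density_le_density_succ_iff_le_left hw hij hjk).1 (h j hij hjk)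

theorem RightSkew.append (hw : ∀ t, 0 < w t) (hij : i ≤ j) (hjk : j < k)
    (hl : RightSkew a w i j) (hr : RightSkew a w (j + 1) k)
    (hd : density a w i j ≤ density a w (j + 1) k) : RightSkew a w i k := by
  intro m him hmk
  rcases lt_trichotomy m j with hmj | rfl | hjm
  · have hm := hl m him hmj
    have hmi : density a w i m ≤ density a w i j :=
      (density_le_density_succ_iff_le_left hw him hmj).1 hm
    exact le_trans (le_min hm (hmi.trans hd)) (min_le_density_of_split hw (by omega) hjk)
  · exact hd
  · have hm := hr m (by omega) hmk
    have hjk' : density a w (j + 1) k ≤ density a w (m + 1) k :=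
      (density_le_density_succ_iff_le_right hw (by omega) hmk).1 hm
    exact (density_le_max_of_split hw hij hjm).trans (max_le (hd.trans hjk') hm)

end RightSkew

section Partition

variable {a w : ℕ → ℝ} {x y : ℕ} {s u : ℕ × ℕ} {t segs : List (ℕ × ℕ)}

theorem isDRSP_singleton_iff :
    IsDRSP a w x y [s] ↔ s = (x, y) ∧ x ≤ y ∧ RightSkew a w x y := by
  constructor
  · rintro ⟨-, hhead, hlast, hmem, -⟩
    obtain ⟨rfl, rfl⟩ : s.1 = x ∧ s.2 = y := ⟨by simpa using hhead, by simpa using hlast⟩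
    exact ⟨rfl, hmem s List.mem_cons_self⟩
  · rintro ⟨rfl, hs⟩
    exact ⟨List.cons_ne_nil _ _, rfl, rfl, by simpa using hs, List.isChain_singleton _⟩

theorem isDRSP_cons_cons_iff :
    IsDRSP a w x y (s :: u :: t) ↔ s.1 = x ∧ s.1 ≤ s.2 ∧ RightSkew a w s.1 s.2 ∧
      density a w u.1 u.2 < density a w s.1 s.2 ∧ IsDRSP a w (s.2 + 1) y (u :: t) := by
  constructor
  · rintro ⟨-, hhead, hlast, hmem, hchain⟩
    obtain ⟨⟨hu, hlt⟩, hchain⟩ := List.isChain_cons_cons.1 hchain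
    have hs := hmem s List.mem_cons_self
    exact ⟨by simpa using hhead, hs.1, hs.2, hlt, List.cons_ne_nil _ _, by simp [hu],
      by simpa using hlast, fun v hv ↦ hmem v (List.mem_cons_of_mem _ hv), hchain⟩
  · rintro ⟨rfl, hs₁, hs₂, hlt, -, hhead, hlast, hmem, hchain⟩
    have hu : u.1 = s.2 + 1 := by simpa using hhead
    exact ⟨List.cons_ne_nil _ _, rfl, by simpa using hlast,
      List.forall_mem_cons.2 ⟨⟨hs₁, hs₂⟩, hmem⟩, List.isChain_cons_cons.2 ⟨⟨hu, hlt⟩, hchain⟩⟩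

theorem IsDRSP.head_fst (h : IsDRSP a w x y (s :: t)) : s.1 = x := by
  simpa using h.2.1

theorem IsDRSP.rightSkew_head (h : IsDRSP a w x y (s :: t)) :
    s.1 ≤ s.2 ∧ RightSkew a w s.1 s.2 :=
  h.2.2.2.1 s List.mem_cons_self

theorem IsDRSP.tail (h : IsDRSP a w x y (s :: t)) (ht : t ≠ []) : IsDRSP a w (s.2 + 1) y t := by
  obtain ⟨u, t, rfl⟩ := List.exists_cons_of_ne_nil ht
  exact (isDRSP_cons_cons_iff.1 h).2.2.2.2

theorem IsDRSP.le (h : IsDRSP a w x y segs) : x ≤ y := by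
  induction segs generalizing x with
  | nil => exact absurd rfl h.1
  | cons s t ih =>
    rcases t with _ | ⟨u, t⟩
    · exact (isDRSP_singleton_iff.1 h).2.1
    · obtain ⟨rfl, hs, -, -, htail⟩ := isDRSP_cons_cons_iff.1 h
      have := ih htail
      omega

theorem IsDRSP.tail_eq_nil_iff (h : IsDRSP a w x y (s :: t)) : t = [] ↔ s.2 = y := by
  rcases t with _ | ⟨u, t⟩
  · simp [(isDRSP_singleton_iff.1 h).1]
  · have := (h.tail (List.cons_ne_nil u t)).le
    simp only [reduceCtorEq, false_iff]
    omega

theorem IsDRSP.head_snd_le (h : IsDRSP a w x y (s :: t)) : s.2 ≤ y := by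
  by_cases ht : t = []
  · exact (h.tail_eq_nil_iff.1 ht).le
  · have := (h.tail ht).le
    omega

theorem IsDRSP.density_succ_lt_head (hw : ∀ t, 0 < w t) (h : IsDRSP a w x y (s :: t))
    {j : ℕ} (hsj : s.2 < j) (hjy : j ≤ y) : density a w (s.2 + 1) j < density a w s.1 s.2 := by
  induction t generalizing x s with
  | nil => exact absurd (h.tail_eq_nil_iff.1 rfl) (by omega)
  | cons u t ih =>
    obtain ⟨-, -, -, hlt, htail⟩ := isDRSP_cons_cons_iff.1 h
    obtain ⟨u₁, u₂⟩ := u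
    obtain rfl : u₁ = s.2 + 1 := htail.head_fst
    obtain ⟨hu, hur⟩ := htail.rightSkew_head
    rcases le_or_gt j u₂ with hju | huj
    · exact (hur.density_le hw (by omega) hju).trans_lt hlt
    · exact (density_le_max_of_split hw hu huj).trans_lt
        (max_lt hlt ((ih htail huj).trans hlt))

theorem IsDRSP.density_lt_head (hw : ∀ t, 0 < w t) (h : IsDRSP a w x y (s :: t))
    {j : ℕ} (hsj : s.2 < j) (hjy : j ≤ y) : density a w x j < density a w x s.2 := by
  obtain rfl := h.head_fst
  rw [← not_le, ← density_le_density_succ_iff_le_left hw h.rightSkew_head.1 hsj, not_le]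
  exact h.density_succ_lt_head hw hsj hjy

theorem IsDRSP.le_head_snd (hw : ∀ t, 0 < w t) (h : IsDRSP a w x y (s :: t)) {q : ℕ}
    (hqy : q ≤ y) (hq : RightSkew a w x q) : q ≤ s.2 := by
  by_contra! hsq
  have hxs : x ≤ s.2 := h.head_fst ▸ h.rightSkew_head.1
  exact (h.density_lt_head hw hsq hqy).not_ge (hq.density_le hw hxs hsq.le)

theorem IsDRSP.head_eq (hw : ∀ t, 0 < w t) {s' : ℕ × ℕ} {t' : List (ℕ × ℕ)}
    (h : IsDRSP a w x y (s :: t)) (h' : IsDRSP a w x y (s' :: t')) : s = s' := by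
  have hsr := h.rightSkew_head.2
  have hs'r := h'.rightSkew_head.2
  rw [h.head_fst] at hsr
  rw [h'.head_fst] at hs'r
  exact Prod.ext (h.head_fst.trans h'.head_fst.symm)
    (le_antisymm (h'.le_head_snd hw h.head_snd_le hsr) (h.le_head_snd hw h'.head_snd_le hs'r))

theorem IsDRSP.eq (hw : ∀ t, 0 < w t) {segs' : List (ℕ × ℕ)} (h : IsDRSP a w x y segs)
    (h' : IsDRSP a w x y segs') : segs = segs' := by
  induction segs generalizing x segs' with
  | nil => exact absurd rfl h.1
  | cons s t ih =>
    obtain ⟨s', t', rfl⟩ := List.exists_cons_of_ne_nil h'.1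
    obtain rfl := h.head_eq hw h'
    by_cases hy : s.2 = y
    · rw [h.tail_eq_nil_iff.2 hy, h'.tail_eq_nil_iff.2 hy]
    · rw [ih (h.tail (h.tail_eq_nil_iff.not.2 hy)) (h'.tail (h'.tail_eq_nil_iff.not.2 hy))]

theorem exists_isDRSP_of_rightSkew_of_isDRSP (hw : ∀ t, 0 < w t) {q : ℕ} (hxq : x ≤ q)
    (hq : RightSkew a w x q) (h : IsDRSP a w (q + 1) y segs) : ∃ segs', IsDRSP a w x y segs' := by
  induction segs generalizing q with
  | nil => exact absurd rfl h.1
  | cons s t ih =>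
    obtain ⟨s₁, s₂⟩ := s
    obtain rfl : s₁ = q + 1 := h.head_fst
    obtain ⟨hqs, hsr⟩ := h.rightSkew_head
    rcases lt_or_ge (density a w (q + 1) s₂) (density a w x q) with hlt | hle
    · exact ⟨(x, q) :: (q + 1, s₂) :: t, isDRSP_cons_cons_iff.2 ⟨rfl, hxq, hq, hlt, h⟩⟩
    · have hxs : RightSkew a w x s₂ := hq.append hw hxq hqs hsr hle
      by_cases ht : t = []
      · obtain rfl : s₂ = y := h.tail_eq_nil_iff.1 ht
        exact ⟨[(x, s₂)], isDRSP_singleton_iff.2 ⟨rfl, by omega, hxs⟩⟩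
      · exact ih (by omega) hxs (h.tail ht)

theorem exists_isDRSP (hw : ∀ t, 0 < w t) (hxy : x ≤ y) : ∃ segs, IsDRSP a w x y segs := by
  induction hxy using Nat.decreasingInduction with
  | self => exact ⟨[(y, y)], isDRSP_singleton_iff.2 ⟨rfl, le_rfl, rightSkew_self a w y⟩⟩
  | of_succ x _ ih =>
    obtain ⟨segs, h⟩ := ih
    exact exists_isDRSP_of_rightSkew_of_isDRSP hw le_rfl (rightSkew_self a w x) h

end Partition

theorem drsp_exists_unique (a w : ℕ → ℝ) (hw : ∀ t, 0 < w t)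
    (x y : ℕ) (hxy : x ≤ y) :
    ∃! segs : List (ℕ × ℕ), IsDRSP a w x y segs := by
  obtain ⟨segs, h⟩ := exists_isDRSP hw hxy
  exact ⟨segs, h, fun segs' h' ↦ h'.eq hw h⟩
end

section
/- Bitonic Lemma: Let B be a nonempty segment and let C_1 C_2 ⋯ C_m be the decreasingly right-skew partition of a segment C immediately following B. Let k be the greatest index i ∈ [0,m] maximizing μ(B C_1 ⋯ C_i). Then for each i ∈ [0, m−1], μ(B C_1 ⋯ C_i) > μ(B C_1 ⋯ C_{i+1}) if and only if i ≥ k. -/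
lemma mediant_aux (A W S T : ℝ) (hW : 0 < W) (hT : 0 < T) :
    ((A + S) / (W + T) < A / W ↔ S / T < A / W) ∧
    (S / T < A / W ↔ S / T < (A + S) / (W + T)) := by
  have hWT : 0 < W + T := by linarith
  constructor
  · rw [div_lt_div_iff₀ hWT hW, div_lt_div_iff₀ hT hW]
    constructor <;> intro h <;> nlinarith
  · rw [div_lt_div_iff₀ hT hW, div_lt_div_iff₀ hT hWT]
    constructor <;> intro h <;> nlinarith

lemma bitonic_abstract (f c : ℕ → ℝ) (m k : ℕ)
    (key : ∀ i < m, (f (i + 1) < f i ↔ c i < f i) ∧ (c i < f i ↔ c i < f (i + 1)))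
    (hdec : ∀ t, t + 1 < m → c (t + 1) < c t)
    (hk : k ≤ m) (hmax : ∀ i ≤ m, f i ≤ f k)
    (hgreatest : ∀ i ≤ m, f i = f k → i ≤ k) :
    ∀ i < m, (f (i + 1) < f i ↔ k ≤ i) := by
  have pstep : ∀ i, i + 1 < m → f (i + 1) < f i → f (i + 2) < f (i + 1) := by
    intro i h hP
    have h1 : c i < f (i + 1) := ((key i (by omega)).2).1 (((key i (by omega)).1).1 hP)
    have h2 : c (i + 1) < f (i + 1) := lt_trans (hdec i h) h1
    exact ((key (i + 1) h).1).2 h2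
  have pchain : ∀ j, j < m → ∀ i, i ≤ j → f (i + 1) < f i → f (j + 1) < f j := by
    intro j
    induction j with
    | zero =>
      intro _ i hi hP
      have : i = 0 := by omega
      subst this; exact hP
    | succ n ih =>
      intro hj i hi hP
      rcases Nat.lt_or_ge i (n + 1) with h | h
      · exact pstep n hj (ih (by omega) i (by omega) hP)
      · have : i = n + 1 := by omega
        subst this; exact hP
  intro i hi
  constructor
  · intro hP
    by_contra hki
    have hik : i + 1 ≤ k := by omega
    have dec : ∀ j, i + 1 ≤ j → j ≤ m → f j ≤ f (i + 1) := by
      intro j hj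
      induction j, hj using Nat.le_induction with
      | base => intro _; exact le_refl _
      | succ j hj ih =>
        intro hjm
        have hPj : f (j + 1) < f j := pchain j (by omega) i (by omega) hP
        exact le_of_lt (lt_of_lt_of_le hPj (ih (by omega)))
    have h1 : f k ≤ f (i + 1) := dec k hik hk
    have h2 : f i ≤ f k := hmax i (by omega)
    linarith
  · intro hki
    by_contra hP
    have inc : ∀ j, k ≤ j → j ≤ i + 1 → f k ≤ f j := by
      intro j hj
      induction j, hj using Nat.le_induction with
      | base => intro _; exact le_refl _
      | succ j hj ih =>
        intro hji
        have hnP : ¬ f (j + 1) < f j := by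
          intro hPj
          exact hP (pchain i hi j (by omega) hPj)
        exact le_trans (ih (by omega)) (le_of_not_gt hnP)
    have h1 : f k ≤ f (i + 1) := inc (i + 1) (by omega) le_rfl
    have h2 : f (i + 1) ≤ f k := hmax (i + 1) (by omega)
    have := hgreatest (i + 1) (by omega) (le_antisymm h2 h1)
    omega

/-- Bitonic lemma.  `B = A(b₀, e 0)` is nonempty, and for `1 ≤ t ≤ m` the
segment `Cₜ = A(e (t-1) + 1, e t)`; the `Cₜ` form the decreasingly right-skew
partition of the segment following `B`.  Let `f i = μ(B C₁ ⋯ C_i)` and let `k`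
be the greatest index in `[0,m]` maximizing `f`.  Then for `i < m`,
`f i > f (i+1)` iff `i ≥ k`. -/
theorem bitonic (a w : ℕ → ℝ) (hw : ∀ t, 0 < w t)
    (b₀ m : ℕ) (e : ℕ → ℕ) (hb : b₀ ≤ e 0)
    (hmono : ∀ t < m, e t < e (t + 1))
    (hrs : ∀ t < m, RightSkew a w (e t + 1) (e (t + 1)))
    (hdec : ∀ t, t + 1 < m →
      density a w (e (t + 1) + 1) (e (t + 2)) < density a w (e t + 1) (e (t + 1)))
    (k : ℕ) (hk : k ≤ m)
    (hmax : ∀ i ≤ m, density a w b₀ (e i) ≤ density a w b₀ (e k))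
    (hgreatest : ∀ i ≤ m, density a w b₀ (e i) = density a w b₀ (e k) → i ≤ k) :
    ∀ i < m, (density a w b₀ (e (i + 1)) < density a w b₀ (e i) ↔ k ≤ i) := by
  have hbe : ∀ i, i ≤ m → b₀ ≤ e i := by
    intro i
    induction i with
    | zero => intro _; exact hb
    | succ n ih =>
      intro h
      exact le_trans (ih (by omega)) (le_of_lt (hmono n (by omega)))
  have hsplit : ∀ i, i < m → ∀ g : ℕ → ℝ,
      ∑ t ∈ Finset.Icc b₀ (e (i + 1)), g t
        = ∑ t ∈ Finset.Icc b₀ (e i), g t + ∑ t ∈ Finset.Icc (e i + 1) (e (i + 1)), g t := by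
    intro i hi g
    have h1 : Finset.Icc (e i + 1) (e (i + 1)) = Finset.Ioc (e i) (e (i + 1)) := by
      ext x; simp [Finset.mem_Icc, Finset.mem_Ioc]
    have h2 : Finset.Icc b₀ (e (i + 1)) = Finset.Icc b₀ (e i) ∪ Finset.Ioc (e i) (e (i + 1)) := by
      have hb1 := hbe i (le_of_lt hi)
      have hb2 := hmono i hi
      ext x; simp [Finset.mem_Icc, Finset.mem_Ioc, Finset.mem_union]; omega
    have hdisj : Disjoint (Finset.Icc b₀ (e i)) (Finset.Ioc (e i) (e (i + 1))) := by
      rw [Finset.disjoint_left]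
      intro x hx hx'
      simp [Finset.mem_Icc] at hx
      simp [Finset.mem_Ioc] at hx'
      omega
    rw [h1, h2, Finset.sum_union hdisj]
  have key : ∀ i, i < m →
      (density a w b₀ (e (i + 1)) < density a w b₀ (e i) ↔
        density a w (e i + 1) (e (i + 1)) < density a w b₀ (e i)) ∧
      (density a w (e i + 1) (e (i + 1)) < density a w b₀ (e i) ↔
        density a w (e i + 1) (e (i + 1)) < density a w b₀ (e (i + 1))) := by
    intro i hi
    have hW : 0 < ∑ t ∈ Finset.Icc b₀ (e i), w t :=
      Finset.sum_pos (fun t _ => hw t) (Finset.nonempty_Icc.mpr (hbe i (le_of_lt hi)))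
    have hT : 0 < ∑ t ∈ Finset.Icc (e i + 1) (e (i + 1)), w t :=
      Finset.sum_pos (fun t _ => hw t) (Finset.nonempty_Icc.mpr (hmono i hi))
    unfold density
    rw [hsplit i hi a, hsplit i hi w]
    exact mediant_aux _ _ _ _ hW hT
  exact bitonic_abstract (fun i => density a w b₀ (e i))
    (fun i => density a w (e i + 1) (e (i + 1))) m k key hdec hk hmax hgreatest
end

section
/- Let B be a nonempty segment followed by the decreasingly right-skew partition C_1 ⋯ C_m of a segment C. If μ(B C_1 ⋯ C_i) > μ(B C_1 ⋯ C_{i+1}) for some i, then μ(B C_1 ⋯ C_{i+1}) > μ(B C_1 ⋯ C_{i+2}) for all valid i+2 ≤ m; i.e., the sequence of densities μ(B C_1 ⋯ C_i), i = 0,…,m, is bitonic (nondecreasing then strictly decreasing). -/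
lemma mediant_lt_iff (A1 W1 A2 W2 : ℝ) (h1 : 0 < W1) (h2 : 0 < W2) :
    ((A1 + A2) / (W1 + W2) < A1 / W1 ↔ A2 / W2 < A1 / W1) ∧
    (A2 / W2 < (A1 + A2) / (W1 + W2) ↔ A2 / W2 < A1 / W1) := by
  have h12 : 0 < W1 + W2 := by linarith
  constructor
  · rw [div_lt_div_iff₀ h12 h1, div_lt_div_iff₀ h2 h1]
    constructor <;> intro h <;> nlinarith
  · rw [div_lt_div_iff₀ h2 h12, div_lt_div_iff₀ h2 h1]
    constructor <;> intro h <;> nlinarith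

lemma sum_split_s10 (f : ℕ → ℝ) (p q r : ℕ) (hpq : p ≤ q) (hqr : q ≤ r) :
    ∑ t ∈ Finset.Icc p r, f t =
      (∑ t ∈ Finset.Icc p q, f t) + ∑ t ∈ Finset.Icc (q + 1) r, f t := by
  rw [← Finset.sum_union (by
    simp only [Finset.disjoint_left, Finset.mem_Icc]
    omega)]
  congr 1
  ext x
  simp only [Finset.mem_union, Finset.mem_Icc]
  omega

/-- `B = A(b₀, e 0)` is nonempty and `Cₜ = A(e (t-1) + 1, e t)` for
`1 ≤ t ≤ m` are consecutive right-skew segments with strictly decreasing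
densities.  Once the sequence of densities `μ(B C₁ ⋯ C_i)` strictly decreases,
it keeps strictly decreasing; i.e. it is bitonic. -/
theorem densities_bitonic (a w : ℕ → ℝ) (hw : ∀ t, 0 < w t)
    (b₀ m : ℕ) (e : ℕ → ℕ) (hb : b₀ ≤ e 0)
    (hmono : ∀ t < m, e t < e (t + 1))
    (hrs : ∀ t < m, RightSkew a w (e t + 1) (e (t + 1)))
    (hdec : ∀ t, t + 1 < m →
      density a w (e (t + 1) + 1) (e (t + 2)) < density a w (e t + 1) (e (t + 1))) :
    ∀ i, i + 2 ≤ m →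
      density a w b₀ (e (i + 1)) < density a w b₀ (e i) →
      density a w b₀ (e (i + 2)) < density a w b₀ (e (i + 1)) := by
  intro i him hlt
  have him1 : i < m := by omega
  have him2 : i + 1 < m := by omega
  have he0 : ∀ t ≤ m, b₀ ≤ e t := by
    intro t
    induction t with
    | zero => intro _; exact hb
    | succ n ih =>
      intro h
      exact (ih (by omega)).trans (hmono n (by omega)).le
  set A1 := ∑ t ∈ Finset.Icc b₀ (e i), a t
  set W1 := ∑ t ∈ Finset.Icc b₀ (e i), w t
  set A2 := ∑ t ∈ Finset.Icc (e i + 1) (e (i + 1)), a t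
  set W2 := ∑ t ∈ Finset.Icc (e i + 1) (e (i + 1)), w t
  set A3 := ∑ t ∈ Finset.Icc (e (i + 1) + 1) (e (i + 2)), a t
  set W3 := ∑ t ∈ Finset.Icc (e (i + 1) + 1) (e (i + 2)), w t
  have hbi : b₀ ≤ e i := he0 i (by omega)
  have hii1 : e i < e (i + 1) := hmono i him1
  have hi12 : e (i + 1) < e (i + 2) := hmono (i + 1) him2
  have hW1 : 0 < W1 := Finset.sum_pos (fun t _ => hw t) (Finset.nonempty_Icc.2 hbi)
  have hW2 : 0 < W2 := Finset.sum_pos (fun t _ => hw t) (Finset.nonempty_Icc.2 hii1)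
  have hW3 : 0 < W3 := Finset.sum_pos (fun t _ => hw t) (Finset.nonempty_Icc.2 hi12)
  have hsA : ∑ t ∈ Finset.Icc b₀ (e (i + 1)), a t = A1 + A2 :=
    sum_split_s10 a b₀ (e i) (e (i + 1)) hbi hii1.le
  have hsW : ∑ t ∈ Finset.Icc b₀ (e (i + 1)), w t = W1 + W2 :=
    sum_split_s10 w b₀ (e i) (e (i + 1)) hbi hii1.le
  have hsA2 : ∑ t ∈ Finset.Icc b₀ (e (i + 2)), a t = (A1 + A2) + A3 := by
    rw [sum_split_s10 a b₀ (e (i + 1)) (e (i + 2)) (hbi.trans hii1.le) hi12.le, hsA]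
  have hsW2 : ∑ t ∈ Finset.Icc b₀ (e (i + 2)), w t = (W1 + W2) + W3 := by
    rw [sum_split_s10 w b₀ (e (i + 1)) (e (i + 2)) (hbi.trans hii1.le) hi12.le, hsW]
  have hd1 : density a w b₀ (e (i + 1)) = (A1 + A2) / (W1 + W2) := by
    rw [density, hsA, hsW]
  have hd2 : density a w b₀ (e (i + 2)) = ((A1 + A2) + A3) / ((W1 + W2) + W3) := by
    rw [density, hsA2, hsW2]
  -- from hlt : mediant < A1/W1, deduce A2/W2 < A1/W1
  have hc1 : A2 / W2 < A1 / W1 := by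
    have := (mediant_lt_iff A1 W1 A2 W2 hW1 hW2).1
    rw [hd1] at hlt
    exact this.mp hlt
  -- hence A2/W2 < mediant
  have hc2 : A2 / W2 < (A1 + A2) / (W1 + W2) :=
    (mediant_lt_iff A1 W1 A2 W2 hW1 hW2).2.mpr hc1
  -- C_{i+2} density smaller still
  have hc3 : A3 / W3 < A2 / W2 := by
    have := hdec i him2
    rwa [density, density] at this
  have hW12 : 0 < W1 + W2 := by linarith
  rw [hd1, hd2]
  exact (mediant_lt_iff (A1 + A2) (W1 + W2) A3 W3 hW12 hW3).1.mpr (hc3.trans hc2)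
end

section
/- In the uniform model (w_k = 1 for all k), among all segments of A of length at least L, the shortest segment achieving the maximum density has length at most 2L − 1. -/
noncomputable def udensity (a : ℕ → ℝ) (i j : ℕ) : ℝ :=
  (∑ t ∈ Finset.Icc i j, a t) / (j - i + 1 : ℝ)

/-! Any segment of length at least `2L` splits into two segments of length at least `L`. The
density of the whole is a weighted mean of the densities of the parts, so one part is at least
as dense, hence also of maximum density, and strictly shorter. -/

theorem Finset.sum_Icc_consecutive {M : Type*} [AddCommMonoid M] (f : ℕ → M) {i k j : ℕ}
    (hik : i ≤ k + 1) (hkj : k ≤ j) :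
    ∑ t ∈ Icc i j, f t = ∑ t ∈ Icc i k, f t + ∑ t ∈ Icc (k + 1) j, f t := by
  simp only [← Ico_add_one_right_eq_Icc]
  exact (sum_Ico_consecutive f hik (by omega)).symm

theorem add_div_add_le_max_div {K : Type*} [Field K] [LinearOrder K] [IsStrictOrderedRing K]
    {s₁ s₂ w₁ w₂ : K} (hw₁ : 0 < w₁) (hw₂ : 0 < w₂) :
    (s₁ + s₂) / (w₁ + w₂) ≤ max (s₁ / w₁) (s₂ / w₂) := by
  set m := max (s₁ / w₁) (s₂ / w₂)
  have h₁ : s₁ ≤ m * w₁ := (div_le_iff₀ hw₁).mp (le_max_left _ _)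
  have h₂ : s₂ ≤ m * w₂ := (div_le_iff₀ hw₂).mp (le_max_right _ _)
  rw [div_le_iff₀ (add_pos hw₁ hw₂)]
  linarith

theorem udensity_le_max_of_split (a : ℕ → ℝ) {i k j : ℕ} (hik : i ≤ k) (hkj : k < j) :
    udensity a i j ≤ max (udensity a i k) (udensity a (k + 1) j) := by
  have hweights : (j - i + 1 : ℝ) = (k - i + 1) + (j - ((k + 1 : ℕ) : ℝ) + 1) := by
    push_cast; ring
  unfold udensity
  rw [Finset.sum_Icc_consecutive a (by omega) hkj.le, hweights]
  have hik' : (i : ℝ) ≤ k := by exact_mod_cast hik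
  have hkj' : ((k + 1 : ℕ) : ℝ) ≤ j := by exact_mod_cast hkj
  exact add_div_add_le_max_div (by linarith) (by linarith)

theorem uniform_shortest_max_density_length_general (a : ℕ → ℝ)
    (n L : ℕ) (hL : 0 < L) (i j : ℕ)
    (hi : 1 ≤ i) (hjn : j ≤ n)
    (hopt : ∀ i' j', 1 ≤ i' → i' ≤ j' → j' ≤ n → L ≤ j' - i' + 1 →
      udensity a i' j' ≤ udensity a i j)
    (hshort : ∀ i' j', 1 ≤ i' → i' ≤ j' → j' ≤ n → L ≤ j' - i' + 1 →
      udensity a i' j' = udensity a i j → j - i ≤ j' - i') :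
    j - i + 1 ≤ 2 * L - 1 := by
  have hshorter_of_dense : ∀ i' j', 1 ≤ i' → i' ≤ j' → j' ≤ n → L ≤ j' - i' + 1 →
      udensity a i j ≤ udensity a i' j' → j - i ≤ j' - i' := fun i' j' h₁ h₂ h₃ h₄ hle =>
    hshort i' j' h₁ h₂ h₃ h₄ (le_antisymm (hopt i' j' h₁ h₂ h₃ h₄) hle)
  by_contra! hlong
  obtain ⟨k, hk⟩ : ∃ k, k + 1 = i + L := ⟨i + L - 1, by omega⟩
  rcases le_max_iff.mp (udensity_le_max_of_split a (show i ≤ k by omega) (show k < j by omega))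
    with h | h
  · have := hshorter_of_dense i k hi (by omega) (by omega) (by omega) h
    omega
  · have := hshorter_of_dense (k + 1) j (by omega) (by omega) hjn (by omega) h
    omega

theorem uniform_shortest_max_density_length (a : ℕ → ℝ)
    (n L : ℕ) (hL : 0 < L) (hLn : L ≤ n) (i j : ℕ)
    (hi : 1 ≤ i) (hij : i ≤ j) (hjn : j ≤ n)
    (hlen : L ≤ j - i + 1)
    (hopt : ∀ i' j', 1 ≤ i' → i' ≤ j' → j' ≤ n → L ≤ j' - i' + 1 →
      udensity a i' j' ≤ udensity a i j)
    (hshort : ∀ i' j', 1 ≤ i' → i' ≤ j' → j' ≤ n → L ≤ j' - i' + 1 →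
      udensity a i' j' = udensity a i j → j - i ≤ j' - i') :
    j - i + 1 ≤ 2 * L - 1 :=
  uniform_shortest_max_density_length_general a n L hL i j hi hjn hopt hshort
end

section
/- Key exchange lemma: Let A be a sequence of pairs (a_k, w_k) with w_k > 0, and let L ≤ U, x ≤ y be given. Suppose i < j, and suppose A(j, j') maximizes density among segments starting at j with L ≤ w(j,·) ≤ U and right endpoint in [x,y], while A(i, i') maximizes density among segments starting at i with L ≤ w(i,·) ≤ U and right endpoint in [x,y]. If i' > j', then μ(j,j') ≥ μ(i,i'). -/
noncomputable def width (w : ℕ → ℝ) (i j : ℕ) : ℝ :=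
  ∑ t ∈ Finset.Icc i j, w t

theorem key_exchange (a w : ℕ → ℝ) (hw : ∀ t, 0 < w t)
    (L U : ℝ) (hLU : L ≤ U) (x y : ℕ) (hxy : x ≤ y)
    (i j i' j' : ℕ) (hij : i < j) (hjj' : j ≤ j') (hii' : i ≤ i')
    (hj'x : x ≤ j') (hj'y : j' ≤ y) (hj'w : L ≤ width w j j' ∧ width w j j' ≤ U)
    (hjopt : ∀ m, x ≤ m → m ≤ y → j ≤ m → L ≤ width w j m → width w j m ≤ U →
      density a w j m ≤ density a w j j')
    (hi'x : x ≤ i') (hi'y : i' ≤ y) (hi'w : L ≤ width w i i' ∧ width w i i' ≤ U)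
    (hiopt : ∀ m, x ≤ m → m ≤ y → i ≤ m → L ≤ width w i m → width w i m ≤ U →
      density a w i m ≤ density a w i i')
    (hlt : j' < i') :
    density a w i i' ≤ density a w j j' := by
  have hji' : j ≤ i' := le_trans hjj' hlt.le
  have hij' : i ≤ j' := le_trans hij.le hjj'
  have hsplit : ∀ (f : ℕ → ℝ) (s : ℕ), s ≤ j' →
      ∑ t ∈ Finset.Icc s i', f t
        = (∑ t ∈ Finset.Icc s j', f t) + ∑ t ∈ Finset.Ioc j' i', f t := by
    intro f s hs
    have hu : Finset.Icc s i' = Finset.Icc s j' ∪ Finset.Ioc j' i' := by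
      ext t; simp only [Finset.mem_Icc, Finset.mem_Ioc, Finset.mem_union]; omega
    have hd : Disjoint (Finset.Icc s j') (Finset.Ioc j' i') := by
      simp only [Finset.disjoint_left, Finset.mem_Icc, Finset.mem_Ioc]; omega
    rw [hu, Finset.sum_union hd]
  -- widths positivity
  have hW1 : 0 < ∑ t ∈ Finset.Icc i j', w t :=
    Finset.sum_pos (fun t _ => hw t) (Finset.nonempty_Icc.2 hij')
  have hW2 : 0 < ∑ t ∈ Finset.Ioc j' i', w t :=
    Finset.sum_pos (fun t _ => hw t) (Finset.nonempty_Ioc.2 hlt)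
  have hV1 : 0 < ∑ t ∈ Finset.Icc j j', w t :=
    Finset.sum_pos (fun t _ => hw t) (Finset.nonempty_Icc.2 hjj')
  -- width monotonicity
  have hmono : ∀ s s' e e' : ℕ, s' ≤ s → e ≤ e' → width w s e ≤ width w s' e' := by
    intro s s' e e' hs he
    exact Finset.sum_le_sum_of_subset_of_nonneg (Finset.Icc_subset_Icc hs he)
      (fun t _ _ => (hw t).le)
  -- feasibility of (j, i') for hjopt
  have h1 := hjopt i' hi'x hi'y hji'
    (le_trans hj'w.1 (hmono j j j' i' le_rfl hlt.le))
    (le_trans (hmono j i i' i' hij.le le_rfl) hi'w.2)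
  -- feasibility of (i, j') for hiopt
  have h2 := hiopt j' hj'x hj'y hij'
    (le_trans hj'w.1 (hmono j i j' j' hij.le le_rfl))
    (le_trans (hmono i i j' i' le_rfl hlt.le) hi'w.2)
  simp only [density] at h1 h2 ⊢
  rw [hsplit a j hjj', hsplit w j hjj'] at h1
  rw [hsplit a i hij', hsplit w i hij'] at h2 ⊢
  set A1 := ∑ t ∈ Finset.Icc i j', a t
  set W1 := ∑ t ∈ Finset.Icc i j', w t
  set A2 := ∑ t ∈ Finset.Ioc j' i', a t
  set W2 := ∑ t ∈ Finset.Ioc j' i', w t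
  set B1 := ∑ t ∈ Finset.Icc j j', a t
  set V1 := ∑ t ∈ Finset.Icc j j', w t
  rw [div_le_div_iff₀ (by linarith) hV1] at h1
  rw [div_le_div_iff₀ hW1 (by linarith)] at h2
  rw [div_le_div_iff₀ (by linarith) hV1]
  -- from h1 : (B1+A2)*V1 ≤ B1*(V1+W2)  ⟹ A2*V1 ≤ B1*W2
  -- from h2 : A1*(W1+W2) ≤ (A1+A2)*W1  ⟹ A1*W2 ≤ A2*W1
  have k1 : A2 * V1 ≤ B1 * W2 := by nlinarith
  have k2 : A1 * W2 ≤ A2 * W1 := by nlinarith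
  have k3 : A1 * V1 * W2 ≤ B1 * W1 * W2 := by nlinarith
  have k4 : A1 * V1 ≤ B1 * W1 := le_of_mul_le_mul_right (by linarith) hW2
  nlinarith
end

section
/- Let A be a sequence with w_k > 0 and i < j ≤ j' < i' indices such that L ≤ w(j,j'), w(j,i'), w(i,j'), w(i,i') ≤ U, μ(j,j') ≥ μ(j,i'), and μ(i,i') ≥ μ(i,j'). Then μ(j,j') ≥ μ(j'+1,i') ≥ μ(i,i'). -/
lemma sum_split_s14 (f : ℕ → ℝ) {m j' i' : ℕ} (h1 : m ≤ j') (h2 : j' ≤ i') :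
    ∑ t ∈ Finset.Icc m i', f t
      = (∑ t ∈ Finset.Icc m j', f t) + ∑ t ∈ Finset.Icc (j' + 1) i', f t := by
  have hu : Finset.Icc m j' ∪ Finset.Ioc j' i' = Finset.Icc m i' := by
    ext x; simp; omega
  rw [Finset.Icc_add_one_left_eq_Ioc, ← Finset.sum_union (by
    simp [Finset.disjoint_left]; omega), hu]

lemma sum_pos' (w : ℕ → ℝ) (hw : ∀ t, 0 < w t) {m n : ℕ} (h : m ≤ n) :
    0 < ∑ t ∈ Finset.Icc m n, w t :=
  Finset.sum_pos (fun t _ => hw t) (Finset.nonempty_Icc.2 h)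

theorem exchange_inequalities (a w : ℕ → ℝ) (hw : ∀ t, 0 < w t)
    (L U : ℝ) (i j j' i' : ℕ)
    (hij : i < j) (hjj' : j ≤ j') (hj'i' : j' < i')
    (h1 : L ≤ width w j j' ∧ width w j j' ≤ U)
    (h2 : L ≤ width w j i' ∧ width w j i' ≤ U)
    (h3 : L ≤ width w i j' ∧ width w i j' ≤ U)
    (h4 : L ≤ width w i i' ∧ width w i i' ≤ U)
    (hj : density a w j i' ≤ density a w j j')
    (hi : density a w i j' ≤ density a w i i') :
    density a w (j' + 1) i' ≤ density a w j j' ∧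
    density a w i i' ≤ density a w (j' + 1) i' := by
  have hii' : i ≤ j' := le_trans hij.le hjj'
  have hji' : j' ≤ i' := hj'i'.le
  set S1 := ∑ t ∈ Finset.Icc j j', a t with hS1
  set W1 := ∑ t ∈ Finset.Icc j j', w t with hW1
  set S2 := ∑ t ∈ Finset.Icc (j'+1) i', a t with hS2
  set W2 := ∑ t ∈ Finset.Icc (j'+1) i', w t with hW2
  set T := ∑ t ∈ Finset.Icc i j', a t with hT
  set V := ∑ t ∈ Finset.Icc i j', w t with hV
  have hW1pos : 0 < W1 := sum_pos' w hw hjj'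
  have hW2pos : 0 < W2 := sum_pos' w hw hj'i'
  have hVpos : 0 < V := sum_pos' w hw hii'
  have hsa : ∑ t ∈ Finset.Icc j i', a t = S1 + S2 := sum_split_s14 a hjj' hji'
  have hsw : ∑ t ∈ Finset.Icc j i', w t = W1 + W2 := sum_split_s14 w hjj' hji'
  have hta : ∑ t ∈ Finset.Icc i i', a t = T + S2 := sum_split_s14 a hii' hji'
  have htw : ∑ t ∈ Finset.Icc i i', w t = V + W2 := sum_split_s14 w hii' hji'
  have hj' : (S1 + S2) / (W1 + W2) ≤ S1 / W1 := by
    simpa [density, hsa, hsw] using hj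
  have hi' : T / V ≤ (T + S2) / (V + W2) := by
    simpa [density, hta, htw] using hi
  have key1 : S2 / W2 ≤ S1 / W1 := by
    rw [div_le_div_iff₀ (by linarith) hW1pos] at hj'
    rw [div_le_div_iff₀ hW2pos hW1pos]
    nlinarith
  have key2 : (T + S2) / (V + W2) ≤ S2 / W2 := by
    rw [div_le_div_iff₀ hVpos (by linarith)] at hi'
    rw [div_le_div_iff₀ (by linarith) hW2pos]
    nlinarith
  constructor
  · simpa [density] using key1
  · simpa [density, hta, htw] using key2
end
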